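/- Let Ω = (0,1) with its Borel σ-field and Lebesgue (probability) measure P, and let C = {f ∈ L0+ : E_P[f] = 1}. Then the topological boundary of C in L0+ (with the topology of convergence in probability) equals the closure of C, namely {f ∈ L0+ : E_P[f] ≤ 1}. -/

import Mathlib

open MeasureTheory Filter Set

noncomputable section

variable {Ω : Type*} [MeasurableSpace Ω]

/-- The nonnegative orthant `L⁰₊` of the space `L⁰` of (a.e.-equivalence classes of)
random variables over `(Ω, ℱ, P)`. -/
def L0plus (P : Measure Ω) : Set (Ω →ₘ[P] ℝ) := {f | 0 ≤ f}

/-- The metric `(f, g) ↦ E[1 ∧ |f - g|]` inducing the topology of convergence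
in probability on `L⁰`. -/
def dist0 (P : Measure Ω) (f g : Ω →ₘ[P] ℝ) : ℝ :=
  ∫ ω, min 1 |f ω - g ω| ∂P

/-- Convergence in probability of a sequence in `L⁰`. -/
def Tendsto0 (P : Measure Ω) (f : ℕ → Ω →ₘ[P] ℝ) (g : Ω →ₘ[P] ℝ) : Prop :=
  Tendsto (fun n => dist0 P (f n) g) atTop (nhds 0)

/-- Closure of a set in `L⁰` with respect to the topology of convergence in probability. -/
def closure0 (P : Measure Ω) (C : Set (Ω →ₘ[P] ℝ)) : Set (Ω →ₘ[P] ℝ) :=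
  {f | ∀ ε : ℝ, 0 < ε → ∃ g ∈ C, dist0 P f g < ε}

/-- A set of `L⁰` is closed iff it contains its closure. -/
def IsClosed0 (P : Measure Ω) (C : Set (Ω →ₘ[P] ℝ)) : Prop :=
  closure0 P C ⊆ C

/-- Boundedness (in probability) of a set `C ⊆ L⁰₊` : `lim_{ℓ → ∞} sup_{f ∈ C} P[f > ℓ] = 0`. -/
def Bounded0 (P : Measure Ω) (C : Set (Ω →ₘ[P] ℝ)) : Prop :=
  Tendsto (fun ℓ : ℝ => ⨆ f ∈ C, P {ω | ℓ < f ω}) atTop (nhds 0)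

/-- The set `C^max` of maximal elements of `C ⊆ L⁰₊` : `f ∈ C` such that `f ≤ g` a.s.
and `g ∈ C` imply `f = g` a.s. -/
def maxSet (P : Measure Ω) (C : Set (Ω →ₘ[P] ℝ)) : Set (Ω →ₘ[P] ℝ) :=
  {f | f ∈ C ∧ ∀ g ∈ C, f ≤ g → f = g}

/-- `C` is max-closed if every maximal element of its closure already belongs to `C`. -/
def MaxClosed (P : Measure Ω) (C : Set (Ω →ₘ[P] ℝ)) : Prop :=
  maxSet P (closure0 P C) ⊆ C

/-- The pairing `⟨μ, f⟩ = ∫ f dμ ∈ [0, ∞]` between a nonnegative measure `μ` and `f ∈ L⁰₊`. -/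
def pairing {P : Measure Ω} (μ : Measure Ω) (f : Ω →ₘ[P] ℝ) : ENNReal :=
  ∫⁻ ω, ENNReal.ofReal (f ω) ∂μ

/-- The set `C^osp` of outer support points of `C ⊆ L⁰₊`: points `g ∈ C^max` for which there
is a σ-finite nonnegative measure `μ ≪ P` with `0 < sup_{f ∈ C} ⟨μ, f⟩ = ⟨μ, g⟩ < ∞`;
by convention `{0}^osp = {0}`. -/
def osp (P : Measure Ω) (C : Set (Ω →ₘ[P] ℝ)) : Set (Ω →ₘ[P] ℝ) :=
  {g | g ∈ maxSet P C ∧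
    (C = {0} ∨ ∃ μ : Measure Ω, μ ≪ P ∧ SigmaFinite μ ∧
      0 < pairing μ g ∧ pairing μ g < ⊤ ∧ (⨆ f ∈ C, pairing μ f) = pairing μ g)}

/-- The solid hull of `C ⊆ L⁰₊`. -/
def solidHull (P : Measure Ω) (C : Set (Ω →ₘ[P] ℝ)) : Set (Ω →ₘ[P] ℝ) :=
  {f | f ∈ L0plus P ∧ ∃ g ∈ C, f ≤ g}

/-- A set `S ⊆ L⁰₊` is solid if `g ∈ S` and `0 ≤ f ≤ g` imply `f ∈ S`. -/
def Solid (P : Measure Ω) (S : Set (Ω →ₘ[P] ℝ)) : Prop :=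
  ∀ g ∈ S, ∀ f : Ω →ₘ[P] ℝ, 0 ≤ f → f ≤ g → f ∈ S

/-- `(g n)` is a sequence of forward convex combinations of `(f n)`. -/
def ForwardConvexComb (P : Measure Ω) (f g : ℕ → Ω →ₘ[P] ℝ) : Prop :=
  ∀ n : ℕ, g n ∈ convexHull ℝ (f '' Set.Ici n)

end

noncomputable section

/-- The probability space `Ω = (0,1)` with its Borel σ-field and Lebesgue measure. -/
abbrev Omega01 : Type := Set.Ioo (0:ℝ) 1

/-- Lebesgue measure on `(0,1)`, a probability measure. -/
noncomputable def P01 : Measure Omega01 :=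
  (volume : Measure ℝ).comap Subtype.val

/-- The set `C = {f ∈ L⁰₊ : E_P[f] = 1}`. -/
noncomputable def C01 : Set (Omega01 →ₘ[P01] ℝ) :=
  {f | f ∈ L0plus P01 ∧ ∫⁻ ω, ENNReal.ofReal (f ω) ∂P01 = 1}

end

/-- The topological boundary of `C` relative to the subspace `L⁰₊` of `L⁰` (with the
topology of convergence in probability): points of `L⁰₊` lying both in the closure of `C`
and in the closure of `L⁰₊ \\ C`. -/
noncomputable def frontier01 : Set (Omega01 →ₘ[P01] ℝ) :=
  (L0plus P01 ∩ closure0 P01 C01) ∩ closure0 P01 (L0plus P01 \ C01)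


/-!
Closedness: a sequence converging in `dist0` converges in probability, hence has an almost
surely convergent subsequence, so nonnegativity passes to the limit and Fatou's lemma bounds
the expectation of the limit. Density: adding a tall thin bump `c • 𝟙_A` with `P A` small
raises the expectation by the arbitrary amount `c * P A` while moving `f` by at most `P A`
in `dist0`. Hence every `f ≥ 0` with `E f ≤ 1` is a limit both of elements of `C` and of
elements of `L⁰₊ \ C`.
-/

open ENNReal

section

variable {Ω : Type*} [MeasurableSpace Ω] {P : Measure Ω}

lemma mem_L0plus_iff {f : Ω →ₘ[P] ℝ} : f ∈ L0plus P ↔ ∀ᵐ ω ∂P, 0 ≤ f ω := by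
  rw [L0plus, Set.mem_ofPred_eq, ← AEEqFun.coeFn_le]
  refine eventually_congr ?_
  filter_upwards [AEEqFun.coeFn_zero (β := ℝ) (μ := P)] with ω hω
  rw [hω, Pi.zero_apply]

lemma closure0_mono {S T : Set (Ω →ₘ[P] ℝ)} (hST : S ⊆ T) : closure0 P S ⊆ closure0 P T :=
  fun _ hf ε hε => (hf ε hε).imp fun _ ⟨hg, hfg⟩ => ⟨hST hg, hfg⟩

lemma dist0_comm (f g : Ω →ₘ[P] ℝ) : dist0 P f g = dist0 P g f := by
  simp only [dist0, abs_sub_comm]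

lemma exists_tendsto0_of_mem_closure0 {S : Set (Ω →ₘ[P] ℝ)} {f : Ω →ₘ[P] ℝ}
    (hf : f ∈ closure0 P S) : ∃ g : ℕ → Ω →ₘ[P] ℝ, (∀ n, g n ∈ S) ∧ Tendsto0 P g f := by
  choose g hgS hgf using fun n : ℕ => hf (1 / (n + 1)) Nat.one_div_pos_of_nat
  refine ⟨g, hgS, squeeze_zero (fun n => ?_) (fun n => (dist0_comm f (g n) ▸ hgf n).le)
    tendsto_one_div_add_atTop_nhds_zero_nat⟩
  exact integral_nonneg fun ω => le_min zero_le_one (abs_nonneg _)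

lemma integrable_min_one_abs [IsFiniteMeasure P] {u : Ω → ℝ} (hu : AEStronglyMeasurable u P) :
    Integrable (fun ω => min 1 |u ω|) P := by
  refine Integrable.mono' (integrable_const 1)
    ((continuous_const.min continuous_abs).comp_aestronglyMeasurable hu) (ae_of_all _ fun ω => ?_)
  rw [Real.norm_eq_abs, abs_of_nonneg (le_min zero_le_one (abs_nonneg _))]
  exact min_le_left _ _

lemma mul_measureReal_le_dist0 [IsFiniteMeasure P] (f g : Ω →ₘ[P] ℝ) {ε : ℝ} (hε : ε ≤ 1) :
    ε * P.real {ω | ε ≤ |f ω - g ω|} ≤ dist0 P f g := by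
  have hset : {ω | ε ≤ |f ω - g ω|} = {ω | ε ≤ min 1 |f ω - g ω|} := by
    ext ω
    simp [hε]
  rw [hset]
  exact mul_meas_ge_le_integral_of_nonneg (ae_of_all _ fun ω => le_min zero_le_one (abs_nonneg _))
    (integrable_min_one_abs (f.aestronglyMeasurable.sub g.aestronglyMeasurable)) ε

lemma Tendsto0.tendstoInMeasure [IsFiniteMeasure P] {g : ℕ → Ω →ₘ[P] ℝ} {f : Ω →ₘ[P] ℝ}
    (hg : Tendsto0 P g f) : TendstoInMeasure P (fun n => ⇑(g n)) atTop f := by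
  rw [tendstoInMeasure_iff_measureReal_dist]
  intro ε hε
  set η := min ε 1
  have hη : 0 < η := lt_min hε one_pos
  have hbound : ∀ n, P.real {ω | ε ≤ dist (g n ω) (f ω)} ≤ dist0 P (g n) f / η := fun n => by
    rw [le_div_iff₀' hη]
    refine le_trans (mul_le_mul_of_nonneg_left (measureReal_mono fun ω hω => ?_) hη.le)
      (mul_measureReal_le_dist0 (g n) f (min_le_right ε 1))
    exact (min_le_left ε 1).trans (Real.dist_eq _ _ ▸ hω)
  exact squeeze_zero (fun n => measureReal_nonneg) hbound (by simpa using hg.div_const η)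

lemma isClosed0_setOf_lintegral_le [IsFiniteMeasure P] (c : ℝ≥0∞) :
    IsClosed0 P {f | f ∈ L0plus P ∧ ∫⁻ ω, ENNReal.ofReal (f ω) ∂P ≤ c} := by
  intro f hf
  obtain ⟨g, hgK, hgf⟩ := exists_tendsto0_of_mem_closure0 hf
  obtain ⟨ns, -, hae⟩ := hgf.tendstoInMeasure.exists_seq_tendsto_ae
  have hg_nonneg : ∀ᵐ ω ∂P, ∀ n, 0 ≤ g (ns n) ω :=
    ae_all_iff.2 fun n => mem_L0plus_iff.1 (hgK _).1
  refine ⟨mem_L0plus_iff.2 ?_, ?_⟩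
  · filter_upwards [hae, hg_nonneg] with ω hlim hnonneg
    exact ge_of_tendsto' hlim hnonneg
  · have hlim : ∀ᵐ ω ∂P,
        ENNReal.ofReal (f ω) = liminf (fun n => ENNReal.ofReal (g (ns n) ω)) atTop := by
      filter_upwards [hae] with ω hω
      exact ((ENNReal.continuous_ofReal.tendsto _).comp hω).liminf_eq.symm
    calc ∫⁻ ω, ENNReal.ofReal (f ω) ∂P
        = ∫⁻ ω, liminf (fun n => ENNReal.ofReal (g (ns n) ω)) atTop ∂P := lintegral_congr_ae hlim
      _ ≤ liminf (fun n => ∫⁻ ω, ENNReal.ofReal (g (ns n) ω) ∂P) atTop :=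
          lintegral_liminf_le' fun n => (g (ns n)).aemeasurable.ennreal_ofReal
      _ ≤ c := liminf_le_of_le (by isBoundedDefault) fun b hb =>
          hb.exists.elim fun n hn => hn.trans (hgK _).2

lemma exists_lintegral_eq_add_dist0_le {f : Ω →ₘ[P] ℝ} (hf : f ∈ L0plus P) {A : Set Ω}
    (hA : MeasurableSet A) (hA0 : P A ≠ 0) (hAtop : P A ≠ ∞) {a : ℝ≥0∞} (ha : a ≠ ∞) :
    ∃ g ∈ L0plus P, ∫⁻ ω, ENNReal.ofReal (g ω) ∂P = ∫⁻ ω, ENNReal.ofReal (f ω) ∂P + a ∧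
      dist0 P f g ≤ P.real A := by
  set c := (a / P A).toReal
  have hc_meas : AEStronglyMeasurable (A.indicator fun _ => c) P :=
    aestronglyMeasurable_const.indicator hA
  set bump : Ω →ₘ[P] ℝ := AEEqFun.mk _ hc_meas
  have hg : ⇑(f + bump) =ᵐ[P] fun ω => f ω + A.indicator (fun _ => c) ω := by
    filter_upwards [AEEqFun.coeFn_add f bump, AEEqFun.coeFn_mk _ hc_meas] with ω h1 h2
    rw [h1, Pi.add_apply, h2]
  have hbump_nonneg : ∀ ω, 0 ≤ A.indicator (fun _ => c) ω :=
    Set.indicator_nonneg fun _ _ => ENNReal.toReal_nonneg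
  refine ⟨f + bump, mem_L0plus_iff.2 ?_, ?_, ?_⟩
  · filter_upwards [hg, mem_L0plus_iff.1 hf] with ω hω hfω
    rw [hω]
    exact add_nonneg hfω (hbump_nonneg ω)
  · have hofReal : ∀ᵐ ω ∂P, ENNReal.ofReal ((f + bump) ω)
        = ENNReal.ofReal (f ω) + A.indicator (fun _ => a / P A) ω := by
      filter_upwards [hg, mem_L0plus_iff.1 hf] with ω hω hfω
      rw [hω, ENNReal.ofReal_add hfω (hbump_nonneg ω)]
      by_cases hωA : ω ∈ A
      · rw [indicator_of_mem hωA, indicator_of_mem hωA,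
          ENNReal.ofReal_toReal (ENNReal.div_ne_top ha hA0)]
      · simp [hωA]
    rw [lintegral_congr_ae hofReal, lintegral_add_right' _ (aemeasurable_const.indicator hA),
      lintegral_indicator_const hA, ENNReal.div_mul_cancel hA0 hAtop]
  · have hdist : (fun ω => min 1 |f ω - (f + bump) ω|) =ᵐ[P] A.indicator fun _ => min 1 c := by
      filter_upwards [hg] with ω hω
      by_cases hωA : ω ∈ A <;> simp [hω, hωA, abs_of_nonneg (show 0 ≤ c from toReal_nonneg)]
    rw [dist0, integral_congr_ae hdist, integral_indicator_const _ hA, smul_eq_mul]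
    exact mul_le_of_le_one_right measureReal_nonneg (min_le_left _ _)

variable [IsFiniteMeasure P]

lemma mem_closure0_setOf_lintegral_eq
    (hP : ∀ δ : ℝ, 0 < δ → ∃ A, MeasurableSet A ∧ P A ≠ 0 ∧ P.real A < δ)
    {f : Ω →ₘ[P] ℝ} (hf : f ∈ L0plus P) {c : ℝ≥0∞} (hc : c ≠ ∞)
    (hfc : ∫⁻ ω, ENNReal.ofReal (f ω) ∂P ≤ c) :
    f ∈ closure0 P {g | g ∈ L0plus P ∧ ∫⁻ ω, ENNReal.ofReal (g ω) ∂P = c} := by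
  intro δ hδ
  obtain ⟨A, hA, hA0, hAδ⟩ := hP δ hδ
  obtain ⟨g, hg, hgint, hfg⟩ :=
    exists_lintegral_eq_add_dist0_le hf hA hA0 (measure_ne_top P A) (ENNReal.sub_ne_top hc)
  exact ⟨g, ⟨hg, hgint.trans (add_tsub_cancel_of_le hfc)⟩, hfg.trans_lt hAδ⟩

lemma mem_closure0_L0plus_diff_setOf_lintegral_eq
    (hP : ∀ δ : ℝ, 0 < δ → ∃ A, MeasurableSet A ∧ P A ≠ 0 ∧ P.real A < δ)
    {f : Ω →ₘ[P] ℝ} (hf : f ∈ L0plus P) {c : ℝ≥0∞} (hc : c ≠ ∞) :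
    f ∈ closure0 P (L0plus P \ {g | g ∈ L0plus P ∧ ∫⁻ ω, ENNReal.ofReal (g ω) ∂P = c}) := by
  intro δ hδ
  obtain ⟨A, hA, hA0, hAδ⟩ := hP δ hδ
  obtain ⟨g, hg, hgint, hfg⟩ := exists_lintegral_eq_add_dist0_le hf hA hA0 (measure_ne_top P A)
    (ENNReal.add_ne_top.2 ⟨hc, ENNReal.one_ne_top⟩)
  refine ⟨g, ⟨hg, fun hgc => ?_⟩, hfg.trans_lt hAδ⟩
  have hc1 : c + 1 ≤ c := (le_add_self.trans_eq hgint.symm).trans_eq hgc.2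
  exact (ENNReal.lt_add_right hc one_ne_zero).not_ge hc1

end

instance : IsProbabilityMeasure P01 := by
  constructor
  rw [P01, (MeasurableEmbedding.subtype_coe measurableSet_Ioo).comap_apply,
    Subtype.coe_image_univ, Real.volume_Ioo]
  simp

lemma exists_measurableSet_P01_ne_zero_lt (δ : ℝ) (hδ : 0 < δ) :
    ∃ A, MeasurableSet A ∧ P01 A ≠ 0 ∧ P01.real A < δ := by
  refine ⟨Subtype.val ⁻¹' Iio (δ / 2), measurable_subtype_coe measurableSet_Iio, ?_⟩
  have hA : P01 (Subtype.val ⁻¹' Iio (δ / 2)) = ENNReal.ofReal (min 1 (δ / 2)) := by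
    rw [P01, (MeasurableEmbedding.subtype_coe measurableSet_Ioo).comap_apply,
      Subtype.image_preimage_coe, Ioo_inter_Iio, Real.volume_Ioo, sub_zero]
  rw [measureReal_def, hA, ENNReal.toReal_ofReal (by positivity)]
  exact ⟨by simp [hδ], (min_le_right _ _).trans_lt (half_lt_self hδ)⟩

/-- On `Ω = (0,1)` with Lebesgue measure `P`, for
`C = {f ∈ L⁰₊ : E_P[f] = 1}`, the topological boundary of `C` in `L⁰₊` equals the closure
of `C`, namely `{f ∈ L⁰₊ : E_P[f] ≤ 1}`. -/
theorem statement13 :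
    frontier01 = closure0 P01 C01 ∧
      frontier01 = {f | f ∈ L0plus P01 ∧ ∫⁻ ω, ENNReal.ofReal (f ω) ∂P01 ≤ 1} := by
  have hclosure :
      closure0 P01 C01 = {f | f ∈ L0plus P01 ∧ ∫⁻ ω, ENNReal.ofReal (f ω) ∂P01 ≤ 1} := by
    refine Subset.antisymm ((closure0_mono ?_).trans (isClosed0_setOf_lintegral_le 1))
      fun f hf => mem_closure0_setOf_lintegral_eq exists_measurableSet_P01_ne_zero_lt
        hf.1 one_ne_top hf.2
    exact fun f hf => ⟨hf.1, hf.2.le⟩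
  have hfrontier : frontier01 = closure0 P01 C01 := by
    refine Subset.antisymm (fun f hf => hf.1.2) fun f hf => ?_
    have hf_nonneg : f ∈ L0plus P01 := (hclosure ▸ hf).1
    exact ⟨⟨hf_nonneg, hf⟩, mem_closure0_L0plus_diff_setOf_lintegral_eq
      exists_measurableSet_P01_ne_zero_lt hf_nonneg one_ne_top⟩
  exact ⟨hfrontier, hfrontier.trans hclosure⟩
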